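/- arXiv:math/0111285 — 3 statements merged into one kernel-verified Lean document; each statement's English description precedes it below -/
import Mathlib

section
/- Let f : ℝ → ℝ be three times continuously differentiable, satisfy hypotheses (H1)–(H3), and suppose f''(0) < 0. Then f is bounded on ℝ (it is bounded above as well as below). -/
open Real Set

noncomputable def Schwarzian (f : ℝ → ℝ) (x : ℝ) : ℝ :=
  iteratedDeriv 3 f x / deriv f x - (3 / 2) * (iteratedDeriv 2 f x / deriv f x) ^ 2

/-- Hypotheses (H1)-(H3): `f ∈ C³`, negative feedback with `f'(0) < 0`,
boundedness below, at most one critical point which is a local extremum,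
and negative Schwarzian wherever `f' ≠ 0`. -/
def HypH (f : ℝ → ℝ) : Prop :=
  ContDiff ℝ 3 f ∧
  (∀ x : ℝ, x ≠ 0 → x * f x < 0) ∧
  deriv f 0 < 0 ∧
  (∃ C : ℝ, ∀ x : ℝ, C ≤ f x) ∧
  (∀ u v : ℝ, deriv f u = 0 → deriv f v = 0 → u = v) ∧
  (∀ u : ℝ, deriv f u = 0 → IsLocalExtr f u) ∧
  (∀ u : ℝ, deriv f u ≠ 0 → Schwarzian f u < 0)

/-!
For `x > 0` the sign condition gives `f x < 0`, and `f` is bounded below, so it remains to bound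
`f` from above on `(-∞, 0]`.

If `f'` vanishes somewhere on `(-∞, 0]`, that zero `a` is the unique critical point. As `f`
decreases on `[a, 0]`, the local extremum at `a` is a maximum, so `f' ≥ 0` to the left of `a` and
`f a` bounds `f` on `(-∞, 0]`.

Otherwise `f' < 0` on `(-∞, 0]`, where negative Schwarzian makes `(-f')^{-1/2}` convex: its
second derivative is `(3 f''² - 2 f' f''') / (4 (-f')^{5/2})`. Since `f''(0) < 0`, its tangent
line `c + m x` at `0` has `c > 0 > m`, so `-f' x ≤ (c + m x)⁻²` on `(-∞, 0]`, and the right side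
has a bounded primitive.
-/

theorem ContDiff.hasDerivAt_iteratedDeriv {𝕜 F : Type*} [NontriviallyNormedField 𝕜]
    [NormedAddCommGroup F] [NormedSpace 𝕜 F] {f : 𝕜 → F} {N : WithTop ℕ∞} (hf : ContDiff 𝕜 N f)
    {n : ℕ} (hn : n < N) (x : 𝕜) :
    HasDerivAt (iteratedDeriv n f) (iteratedDeriv (n + 1) f x) x := by
  rw [iteratedDeriv_succ]
  exact (hf.differentiable_iteratedDeriv n hn x).hasDerivAt

theorem ConvexOn.add_mul_sub_le_of_hasDerivAt {S : Set ℝ} {f : ℝ → ℝ} {x y f' : ℝ}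
    (hf : ConvexOn ℝ S f) (hx : x ∈ S) (hy : y ∈ S) (hxy : x ≤ y) (hf' : HasDerivAt f f' y) :
    f y + f' * (x - y) ≤ f x := by
  rcases hxy.eq_or_lt with rfl | hxy
  · simp
  have := hf.slope_le_of_hasDerivAt hx hy hxy hf'
  rw [slope_def_field, div_le_iff₀ (sub_pos.mpr hxy)] at this
  linarith

theorem IsPreconnected.neg_of_ne_zero {X : Type*} [TopologicalSpace X] {s : Set X} {g : X → ℝ}
    (hs : IsPreconnected s) (hg : ContinuousOn g s) (h0 : ∀ x ∈ s, g x ≠ 0) {p : X} (hp : p ∈ s)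
    (hgp : g p < 0) {x : X} (hx : x ∈ s) : g x < 0 := by
  by_contra! hgx
  obtain ⟨z, hz, hgz⟩ := hs.intermediate_value hp hx hg ⟨hgp.le, hgx⟩
  exact h0 z hz hgz

theorem StrictAntiOn.not_isLocalMin_left {β : Type*} [Preorder β] {f : ℝ → β} {a b : ℝ}
    (hab : a < b) (hf : StrictAntiOn f (Icc a b)) : ¬IsLocalMin f a := fun hmin ↦ by
  obtain ⟨x, hfx, hx⟩ := ((hmin.filter_mono nhdsWithin_le_nhds).and (Ioo_mem_nhdsGT hab)).exists
  exact (hf (left_mem_Icc.mpr hab.le) ⟨hx.1.le, hx.2.le⟩ hx.1).not_ge hfx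

theorem StrictAntiOn.not_isLocalMax_right {β : Type*} [Preorder β] {f : ℝ → β} {a b : ℝ}
    (hab : a < b) (hf : StrictAntiOn f (Icc a b)) : ¬IsLocalMax f b := fun hmax ↦ by
  obtain ⟨x, hfx, hx⟩ := ((hmax.filter_mono nhdsWithin_le_nhds).and (Ioo_mem_nhdsLT hab)).exists
  exact (hf ⟨hx.1.le, hx.2.le⟩ (right_mem_Icc.mpr hab.le) hx.2).not_ge hfx

theorem le_inv_sq_of_le_inv_sqrt {a b : ℝ} (ha : 0 < a) (h : a ≤ (√b)⁻¹) : b ≤ (a ^ 2)⁻¹ := by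
  rcases le_or_gt b 0 with hb | hb
  · exact hb.trans (by positivity)
  rw [le_inv_comm₀ ha (sqrt_pos.mpr hb), sqrt_le_left (by positivity), inv_pow] at h
  exact h

theorem hasDerivAt_inv_sqrt {u : ℝ → ℝ} {u' x : ℝ} (hu : HasDerivAt u u' x) (hx : 0 < u x) :
    HasDerivAt (fun y ↦ (√(u y))⁻¹) (-u' / (2 * √(u x) ^ 3)) x := by
  have hs : 0 < √(u x) := sqrt_pos.mpr hx
  refine ((hu.sqrt hx.ne').fun_inv hs.ne').congr_deriv ?_
  field_simp

theorem convexOn_inv_sqrt {u u' u'' : ℝ → ℝ} {D : Set ℝ} (hD : Convex ℝ D)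
    (hu : ∀ x ∈ D, 0 < u x) (hu' : ∀ x ∈ D, HasDerivAt u (u' x) x)
    (hu'' : ∀ x ∈ D, HasDerivAt u' (u'' x) x) (h : ∀ x ∈ D, 2 * u x * u'' x ≤ 3 * u' x ^ 2) :
    ConvexOn ℝ D fun x ↦ (√(u x))⁻¹ := by
  refine convexOn_of_hasDerivWithinAt2_nonneg hD
    (f'' := fun x ↦ (3 * u' x ^ 2 - 2 * u x * u'' x) / (4 * √(u x) ^ 5))
    (fun x hx ↦ (hasDerivAt_inv_sqrt (hu' x hx) (hu x hx)).continuousAt.continuousWithinAt)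
    (fun x hx ↦ (hasDerivAt_inv_sqrt (hu' x (interior_subset hx))
      (hu x (interior_subset hx))).hasDerivWithinAt) (fun x hx ↦ ?_)
    (fun x hx ↦ div_nonneg (sub_nonneg.mpr (h x (interior_subset hx))) (by positivity))
  have hx := interior_subset hx
  have hs : 0 < √(u x) := sqrt_pos.mpr (hu x hx)
  have hden := (((hu' x hx).sqrt (hu x hx).ne').fun_pow 3).const_mul 2
  refine ((hu'' x hx).fun_neg.fun_div hden (by positivity)).hasDerivWithinAt.congr_deriv ?_
  have hsq : √(u x) ^ 2 = u x := sq_sqrt (hu x hx).le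
  field_simp
  norm_num
  linear_combination (-8 * u'' x * √(u x) ^ 2) * hsq

theorem le_sub_inv_of_neg_deriv_le_inv_sq {f : ℝ → ℝ} (hf : Differentiable ℝ f) {c m : ℝ}
    (hc : 0 < c) (hm : m < 0) (h : ∀ x ≤ 0, -deriv f x ≤ ((c + m * x) ^ 2)⁻¹) {x : ℝ}
    (hx : x ≤ 0) : f x ≤ f 0 - (m * c)⁻¹ := by
  have hpos : ∀ y ≤ 0, 0 < c + m * y := fun y hy ↦
    add_pos_of_pos_of_nonneg hc (mul_nonneg_of_nonpos_of_nonpos hm.le hy)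
  have hφ : ∀ y ≤ 0, HasDerivAt (fun y ↦ f y - (m * (c + m * y))⁻¹)
      (deriv f y + ((c + m * y) ^ 2)⁻¹) y := by
    intro y hy
    have hl : HasDerivAt (fun y ↦ m * (c + m * y)) (m * m) y := by
      simpa using ((hasDerivAt_id y).const_mul m |>.const_add c).const_mul m
    refine ((hf y).hasDerivAt.sub (hl.fun_inv (by nlinarith [hpos y hy]))).congr_deriv ?_
    have := (hpos y hy).ne'
    have := hm.ne
    field_simp
    ring
  have hmono : MonotoneOn (fun y ↦ f y - (m * (c + m * y))⁻¹) (Iic 0) := by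
    refine monotoneOn_of_deriv_nonneg (convex_Iic 0)
      (fun y hy ↦ (hφ y hy).continuousAt.continuousWithinAt)
      (fun y hy ↦ (hφ y (interior_subset hy : y ∈ Iic 0)).differentiableAt.differentiableWithinAt)
      (fun y hy ↦ ?_)
    rw [interior_Iic] at hy
    rw [(hφ y hy.le).deriv]
    linarith [h y hy.le]
  have hφx := hmono hx (mem_Iic.2 le_rfl) hx
  have : (m * (c + m * x))⁻¹ ≤ 0 :=
    inv_nonpos.mpr (mul_nonpos_of_nonpos_of_nonneg hm.le (hpos x hx).le)
  simp only [mul_zero, add_zero] at hφx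
  linarith

theorem schwarzian_neg_iff {f : ℝ → ℝ} {x : ℝ} (hx : deriv f x ≠ 0) :
    Schwarzian f x < 0 ↔
      2 * deriv f x * iteratedDeriv 3 f x < 3 * iteratedDeriv 2 f x ^ 2 := by
  have key : Schwarzian f x = (2 * deriv f x * iteratedDeriv 3 f x -
      3 * iteratedDeriv 2 f x ^ 2) / (2 * deriv f x ^ 2) := by
    unfold Schwarzian
    field_simp
  rw [key, div_lt_iff₀ (by positivity), zero_mul, sub_neg]

theorem isMaxOn_Iic_of_isLocalExtr {f : ℝ → ℝ} (hf : Differentiable ℝ f)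
    (hf' : Continuous (deriv f)) {a b : ℝ} (hab : a < b) (hb : deriv f b < 0)
    (hextr : IsLocalExtr f a) (huniq : ∀ x, deriv f x = 0 → x = a) : IsMaxOn f (Iic b) a := by
  have hne : ∀ x, x ≠ a → deriv f x ≠ 0 := fun x hx h ↦ hx (huniq x h)
  have hright : ∀ x ∈ Ioc a b, deriv f x < 0 := fun x hx ↦
    isPreconnected_Ioc.neg_of_ne_zero hf'.continuousOn (fun y hy ↦ hne y hy.1.ne')
      ⟨hab, le_rfl⟩ hb hx
  have hdecr : StrictAntiOn f (Icc a b) :=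
    strictAntiOn_of_deriv_neg (convex_Icc a b) hf.continuous.continuousOn fun x hx ↦
      hright x (Ioo_subset_Ioc_self (by rwa [interior_Icc] at hx))
  have hmax : IsLocalMax f a := hextr.resolve_left (hdecr.not_isLocalMin_left hab)
  have hleft : ∀ x ∈ Iio a, 0 ≤ deriv f x := by
    intro y hy
    by_contra! hneg
    have hdecr' : StrictAntiOn f (Icc y a) :=
      strictAntiOn_of_deriv_neg (convex_Icc y a) hf.continuous.continuousOn fun x hx ↦ by
        rw [interior_Icc] at hx
        exact isPreconnected_Iio.neg_of_ne_zero hf'.continuousOn (fun z hz ↦ hne z hz.ne) hy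
          hneg hx.2
    exact hdecr'.not_isLocalMax_right hy hmax
  have hincr : MonotoneOn f (Iic a) :=
    monotoneOn_of_deriv_nonneg (convex_Iic a) hf.continuous.continuousOn
      hf.differentiableOn fun x hx ↦ hleft x (by rwa [interior_Iic] at hx)
  intro x hx
  rcases le_total x a with hxa | hax
  · exact hincr hxa (mem_Iic.2 le_rfl) hxa
  · exact hdecr.antitoneOn ⟨le_rfl, hab.le⟩ ⟨hax, hx⟩ hax

theorem bddAbove_image_Iic_of_schwarzian_neg {f : ℝ → ℝ} (hf : ContDiff ℝ 3 f)
    (hneg : ∀ x ≤ 0, deriv f x < 0) (hS : ∀ x ≤ 0, Schwarzian f x < 0)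
    (h2 : iteratedDeriv 2 f 0 < 0) : BddAbove (f '' Iic 0) := by
  have hu' : ∀ x, HasDerivAt (fun y ↦ -deriv f y) (-iteratedDeriv 2 f x) x := fun x ↦ by
    simpa only [iteratedDeriv_one] using
      (hf.hasDerivAt_iteratedDeriv (n := 1) (by norm_num) x).fun_neg
  have hu'' : ∀ x, HasDerivAt (fun y ↦ -iteratedDeriv 2 f y) (-iteratedDeriv 3 f x) x :=
    fun x ↦ (hf.hasDerivAt_iteratedDeriv (n := 2) (by norm_num) x).fun_neg
  have hconv : ConvexOn ℝ (Iic 0) fun x ↦ (√(-deriv f x))⁻¹ :=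
    convexOn_inv_sqrt (convex_Iic 0) (fun x hx ↦ neg_pos.2 (hneg x hx)) (fun x _ ↦ hu' x)
      (fun x _ ↦ hu'' x) fun x hx ↦ by
        have := (schwarzian_neg_iff (hneg x hx).ne).1 (hS x hx)
        linarith
  set c := (√(-deriv f 0))⁻¹
  set m := iteratedDeriv 2 f 0 / (2 * √(-deriv f 0) ^ 3)
  have hs : 0 < √(-deriv f 0) := sqrt_pos.2 (neg_pos.2 (hneg 0 le_rfl))
  have hc : 0 < c := inv_pos.2 hs
  have hm : m < 0 := div_neg_of_neg_of_pos h2 (by positivity)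
  have htangent : ∀ x ≤ 0, c + m * x ≤ (√(-deriv f x))⁻¹ := fun x hx ↦ by
    have := hconv.add_mul_sub_le_of_hasDerivAt hx (mem_Iic.2 le_rfl) hx
      (hasDerivAt_inv_sqrt (hu' 0) (neg_pos.2 (hneg 0 le_rfl)))
    rwa [neg_neg, sub_zero] at this
  refine ⟨f 0 - (m * c)⁻¹, forall_mem_image.2 fun x hx ↦ ?_⟩
  refine le_sub_inv_of_neg_deriv_le_inv_sq (hf.differentiable (by norm_num)) hc hm
    (fun y hy ↦ le_inv_sq_of_le_inv_sqrt ?_ (htangent y hy)) hx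
  exact add_pos_of_pos_of_nonneg hc (mul_nonneg_of_nonpos_of_nonpos hm.le hy)

/-- Corollary 2.2: if `f` satisfies (H1)-(H3) and `f''(0) < 0`, then `f` is
bounded on ℝ. -/
theorem bounded_of_negative_second_derivative
    (f : ℝ → ℝ) (hf : HypH f) (h2 : iteratedDeriv 2 f 0 < 0) :
    ∃ K : ℝ, ∀ x : ℝ, |f x| ≤ K := by
  obtain ⟨hC3, hsign, hd0, ⟨C, hC⟩, huniq, hextr, hS⟩ := hf
  have hd : Continuous (deriv f) := by
    simpa only [iteratedDeriv_one] using hC3.continuous_iteratedDeriv 1 (by norm_num)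
  have hIic : BddAbove (f '' Iic 0) := by
    by_cases hneg : ∀ x ≤ 0, deriv f x < 0
    · exact bddAbove_image_Iic_of_schwarzian_neg hC3 hneg (fun x hx ↦ hS x (hneg x hx).ne) h2
    push Not at hneg
    obtain ⟨x₀, hx₀, hd₀⟩ := hneg
    obtain ⟨a, ha, hda⟩ := intermediate_value_Icc' hx₀ hd.continuousOn ⟨hd0.le, hd₀⟩
    have ha0 : a < 0 := ha.2.lt_of_ne fun h ↦ hd0.ne (h ▸ hda)
    exact (isMaxOn_Iic_of_isLocalExtr (hC3.differentiable (by norm_num)) hd ha0 hd0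
      (hextr a hda) fun x hx ↦ huniq x a hx hda).bddAbove
  have hIoi : BddAbove (f '' Ioi 0) :=
    ⟨0, forall_mem_image.2 fun x hx ↦ (neg_of_mul_neg_right (hsign x hx.ne') hx.le).le⟩
  have hbdd : Bornology.IsBounded (range f) := by
    refine Metric.isBounded_of_bddAbove_of_bddBelow ?_ ⟨C, forall_mem_range.2 hC⟩
    rw [← image_univ, ← Iic_union_Ioi (a := 0), image_union]
    exact hIic.union hIoi
  obtain ⟨K, hK⟩ := isBounded_iff_forall_norm_le.1 hbdd
  exact ⟨K, fun x ↦ hK _ (mem_range_self x)⟩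
end

section
/- Let f ∈ C³(ℝ,ℝ) satisfy hypotheses (H1)–(H3) with f''(0) > 0 and f'(0) ∈ [−1.5, −1.25]. With a = f'(0), b = f''(0)/2, x₂ = (a + a²)/b, and r, B, R as in the context, one has B(x) > R(x) for all x ≥ x₂. -/
open Real Set

/-- The rational comparison function `r(x; a, b) = a²x/(a - bx)`. -/
noncomputable def rfun (a b : ℝ) (x : ℝ) : ℝ := a ^ 2 * x / (a - b * x)

/-- `A(x) = x + r(x) + (1/r(x)) ∫_x^0 r(t) dt`, with `A(0) = 0`. -/
noncomputable def Afun (a b : ℝ) (x : ℝ) : ℝ :=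
  if x = 0 then 0 else x + rfun a b x + (1 / rfun a b x) * ∫ t in x..0, rfun a b t

/-- `B(x) = (1/r(x)) ∫_{-r(x)}^0 r(s) ds`, with `B(0) = 0`. -/
noncomputable def Bfun (a b : ℝ) (x : ℝ) : ℝ :=
  if x = 0 then 0 else (1 / rfun a b x) * ∫ s in (-(rfun a b x))..0, rfun a b s

/-- `D(x) = A(x)` if `r(x) < -x`, and `D(x) = B(x)` otherwise. -/
noncomputable def Dfun (a b : ℝ) (x : ℝ) : ℝ :=
  if rfun a b x < -x then Afun a b x else Bfun a b x

/-!
Put `u = b r(x) / a`, which is positive for `x > 0` and satisfies `u ≥ -1 - a` exactly when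
`x ≥ x₂`. Integrating `r` gives the closed form `B(x) = -a²/b + a²/(b u) log(1 + u)`, while
`R(x)` is a rational function of `a` and `u`. Since `log(1 + u) = 2 artanh w` with
`w = u/(2 + u)`, the truncation `2w + 2w³/3` bounds the logarithm from below, and `B(x) > R(x)`
reduces to a polynomial inequality in `a` and `u`, valid for `a ≤ -5/4` and `u ≥ -1 - a`.
-/

theorem lt_log_one_add_of_pos_cubic {u : ℝ} (hu : 0 < u) :
    2 * u / (2 + u) + 2 * u ^ 3 / (3 * (2 + u) ^ 3) < log (1 + u) := by
  set g : ℝ → ℝ := fun s => log (1 + s) - (2 * s / (2 + s) + 2 * s ^ 3 / (3 * (2 + s) ^ 3))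
  have hg' : ∀ t, 0 ≤ t → HasDerivAt g (t ^ 4 / ((1 + t) * (2 + t) ^ 4)) t := by
    intro t ht
    have h1 : (1 : ℝ) + t ≠ 0 := by positivity
    have h2 : (2 : ℝ) + t ≠ 0 := by positivity
    have h3 : (3 : ℝ) * (2 + t) ^ 3 ≠ 0 := by positivity
    have hlog := ((hasDerivAt_id t).const_add (1 : ℝ)).log h1
    have hfst := ((hasDerivAt_id t).const_mul (2 : ℝ)).div ((hasDerivAt_id t).const_add 2) h2
    have hsnd := ((hasDerivAt_pow 3 t).const_mul (2 : ℝ)).div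
      ((((hasDerivAt_id t).const_add (2 : ℝ)).pow 3).const_mul 3) h3
    refine (hlog.sub (hfst.add hsnd)).congr_deriv ?_
    simp only [id, Pi.pow_apply, Nat.cast_ofNat]
    field_simp
    ring
  have hmono : StrictMonoOn g (Ici 0) := by
    apply strictMonoOn_of_deriv_pos (convex_Ici 0)
    · exact fun t ht => (hg' t ht).continuousAt.continuousWithinAt
    · intro t ht
      rw [interior_Ici] at ht
      rw [(hg' t (le_of_lt ht)).deriv]
      have : (0 : ℝ) < t := ht
      positivity
  have := hmono self_mem_Ici (mem_Ici.mpr hu.le) hu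
  norm_num [g] at this
  linarith

-- In the variables `p = -5/4 - a ≥ 0` and `v = u + 1 + a ≥ 0` the difference of the two sides
-- is a polynomial with positive coefficients.
theorem comparison_poly_lt {a u : ℝ} (ha : a ≤ -5 / 4) (hu : -1 - a ≤ u) :
    a ^ 2 * (3 * u ^ 2 + 10 * u + 12) * (6 * a ^ 2 + 3 * a + 2 * u) <
      18 * (-a) * (a + 1 / 2) ^ 2 * (2 + u) ^ 3 := by
  obtain ⟨p, hp, rfl⟩ : ∃ p, 0 ≤ p ∧ a = -5 / 4 - p := ⟨-5 / 4 - a, by linarith, by ring⟩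
  obtain ⟨v, hv, rfl⟩ : ∃ v, 0 ≤ v ∧ u = v + 1 / 4 + p := ⟨u - 1 / 4 - p, by linarith, by ring⟩
  rw [← sub_pos]
  ring_nf
  positivity

section

variable {a b : ℝ}

theorem hasDerivAt_rfun_primitive (hb : b ≠ 0) {s : ℝ} (hs : a - b * s ≠ 0) :
    HasDerivAt (fun t => -(a ^ 2 / b) * t - a ^ 3 / b ^ 2 * log (a - b * t)) (rfun a b s) s := by
  have hlin : HasDerivAt (fun t : ℝ => a - b * t) (-(b * 1)) s :=
    ((hasDerivAt_id s).const_mul b).const_sub a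
  refine (((hasDerivAt_id s).const_mul (-(a ^ 2 / b))).sub
    ((hlin.log hs).const_mul (a ^ 3 / b ^ 2))).congr_deriv ?_
  rw [rfun]
  field_simp
  ring

theorem integral_rfun (ha : a < 0) (hb : 0 < b) {y : ℝ} (hy : 0 ≤ y) :
    ∫ s in y..0, rfun a b s = a ^ 2 / b * y + a ^ 3 / b ^ 2 * log (1 - b * y / a) := by
  have hneg : ∀ s ∈ uIcc y 0, a - b * s < 0 := by
    intro s hs
    rw [uIcc_of_ge hy] at hs
    nlinarith [hs.1]
  have hcont : ContinuousOn (rfun a b) (uIcc y 0) :=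
    ContinuousOn.div (by fun_prop) (by fun_prop) fun s hs => (hneg s hs).ne
  rw [intervalIntegral.integral_eq_sub_of_hasDerivAt
    (fun s hs => hasDerivAt_rfun_primitive hb.ne' (hneg s hs).ne) hcont.intervalIntegrable]
  have hsplit : a - b * y = a * (1 - b * y / a) := by field_simp [ha.ne]
  have hpos : 0 < 1 - b * y / a := by
    have : b * y / a ≤ 0 := div_nonpos_of_nonneg_of_nonpos (by positivity) ha.le
    linarith
  rw [hsplit, log_mul ha.ne hpos.ne']
  simp only [mul_zero, sub_zero]
  ring

theorem Bfun_eq_of_rfun_neg (ha : a < 0) (hb : 0 < b) {x u : ℝ} (hr : rfun a b x < 0)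
    (hu : b * rfun a b x = a * u) :
    Bfun a b x = -(a ^ 2 / b) + a ^ 2 / (b * u) * log (1 + u) := by
  have hx : x ≠ 0 := by rintro rfl; simp [rfun] at hr
  have hu0 : u ≠ 0 := by rintro rfl; nlinarith
  have hlog : 1 - b * -rfun a b x / a = 1 + u := by field_simp [ha.ne]; linarith
  rw [Bfun, if_neg hx, integral_rfun ha hb (by linarith), hlog]
  field_simp [hr.ne]
  linear_combination (-(a ^ 2 * log (1 + u))) * hu

theorem lt_Bfun_of_rfun_neg (ha : a < 0) (hb : 0 < b) {x u : ℝ} (hr : rfun a b x < 0)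
    (hu : b * rfun a b x = a * u) :
    -(a ^ 2 * u * (3 * u ^ 2 + 10 * u + 12)) / (3 * b * (2 + u) ^ 3) < Bfun a b x := by
  have hu0 : 0 < u := by nlinarith
  have hlower : -(a ^ 2 * u * (3 * u ^ 2 + 10 * u + 12)) / (3 * b * (2 + u) ^ 3) =
      -(a ^ 2 / b) + a ^ 2 / (b * u) * (2 * u / (2 + u) + 2 * u ^ 3 / (3 * (2 + u) ^ 3)) := by
    field_simp
    ring
  have hcoef : 0 < a ^ 2 / (b * u) := div_pos (by nlinarith) (by positivity)
  rw [Bfun_eq_of_rfun_neg ha hb hr hu, hlower]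
  exact add_lt_add_right (mul_lt_mul_of_pos_left (lt_log_one_add_of_pos_cubic hu0) hcoef) _

theorem rfun_shift_eq (ha : a ≠ 0) (hb : b ≠ 0) {x u : ℝ} (hx : b * x * (a + u) = u * a) :
    rfun (a + 1 / 2) (b * (1 + 1 / (6 * a))) x =
      6 * (a + 1 / 2) ^ 2 * (u * a) / (b * (6 * a ^ 2 + 3 * a + 2 * u)) := by
  have hau : a + u ≠ 0 := by
    intro h
    have : u * a = 0 := by rw [← hx, h, mul_zero]
    have : u = -a := by linarith
    simp_all
  obtain rfl : x = u * a / (b * (a + u)) := by field_simp; linarith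
  have hden : a + 1 / 2 - b * (1 + 1 / (6 * a)) * (u * a / (b * (a + u))) =
      (6 * a ^ 2 + 3 * a + 2 * u) / (6 * (a + u)) := by
    field_simp
    ring
  rw [rfun, hden]
  field_simp

theorem rfun_shift_lt_Bfun (ha : a ≤ -5 / 4) (hb : 0 < b) {x : ℝ} (hx : (a + a ^ 2) / b ≤ x) :
    rfun (a + 1 / 2) (b * (1 + 1 / (6 * a))) x < Bfun a b x := by
  have ha0 : a < 0 := by linarith
  have hbx : a + a ^ 2 ≤ b * x := (div_le_iff₀' hb).mp hx
  have hx0 : 0 < x := by nlinarith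
  have hd : a - b * x < 0 := by nlinarith
  set u := a * b * x / (a - b * x) with hu_def
  have hu0 : 0 < u := div_pos_of_neg_of_neg (by nlinarith) hd
  have hu_lb : -1 - a ≤ u := by rw [hu_def, le_div_iff_of_neg hd]; nlinarith
  have hr : rfun a b x < 0 := div_neg_of_pos_of_neg (mul_pos (by nlinarith) hx0) hd
  have hr_u : b * rfun a b x = a * u := by rw [rfun, hu_def]; field_simp
  have hx_u : b * x * (a + u) = u * a := by rw [hu_def]; field_simp [hd.ne]; ring
  have hD : 0 < 6 * a ^ 2 + 3 * a + 2 * u := by nlinarith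
  calc rfun (a + 1 / 2) (b * (1 + 1 / (6 * a))) x
      = 6 * (a + 1 / 2) ^ 2 * (u * a) / (b * (6 * a ^ 2 + 3 * a + 2 * u)) :=
        rfun_shift_eq ha0.ne hb.ne' hx_u
    _ < -(a ^ 2 * u * (3 * u ^ 2 + 10 * u + 12)) / (3 * b * (2 + u) ^ 3) := by
        rw [div_lt_div_iff₀ (by positivity) (by positivity)]
        nlinarith [mul_lt_mul_of_pos_left (comparison_poly_lt ha hu_lb) (mul_pos hb hu0)]
    _ < Bfun a b x := lt_Bfun_of_rfun_neg ha0 hb hr hr_u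

end

theorem Bfun_gt_Rfun_general
    (f : ℝ → ℝ) (h2 : 0 < iteratedDeriv 2 f 0)
    (h1 : deriv f 0 ∈ Set.Icc (-1.5 : ℝ) (-1.25))
    (a b a₁ b₁ x₂ : ℝ)
    (haeq : a = deriv f 0) (hbeq : b = iteratedDeriv 2 f 0 / 2)
    (ha₁ : a₁ = a + 1 / 2) (hb₁ : b₁ = b * (1 + 1 / (6 * a)))
    (hx₂ : x₂ = (a + a ^ 2) / b) :
    ∀ x : ℝ, x₂ ≤ x → Bfun a b x > rfun a₁ b₁ x := by
  intro x hx
  have ha : a ≤ -5 / 4 := by rw [haeq]; norm_num at h1 ⊢; exact h1.2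
  have hb : 0 < b := by rw [hbeq]; positivity
  subst ha₁ hb₁ hx₂
  exact rfun_shift_lt_Bfun ha hb hx

/-- Lemma 2.6: if `f'(0) ∈ [-1.5, -1.25]`, then `B(x) > R(x)` for all `x ≥ x₂`. -/
theorem Bfun_gt_Rfun
    (f : ℝ → ℝ) (hf : HypH f) (h2 : 0 < iteratedDeriv 2 f 0)
    (h1 : deriv f 0 ∈ Set.Icc (-1.5 : ℝ) (-1.25))
    (a b a₁ b₁ x₂ : ℝ)
    (haeq : a = deriv f 0) (hbeq : b = iteratedDeriv 2 f 0 / 2)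
    (ha₁ : a₁ = a + 1 / 2) (hb₁ : b₁ = b * (1 + 1 / (6 * a)))
    (hx₂ : x₂ = (a + a ^ 2) / b) :
    ∀ x : ℝ, x₂ ≤ x → Bfun a b x > rfun a₁ b₁ x :=
  Bfun_gt_Rfun_general f h2 h1 a b a₁ b₁ x₂ haeq hbeq ha₁ hb₁ hx₂
end

section
/- Let a < 0 < b, and define r(x) = a²x/(a − bx) on (a/b, +∞), A(x) = x + r(x) + (1/r(x))·∫ₓ⁰ r(t) dt for x ∈ (a/b, ∞) with x ≠ 0, A(0) = 0, and B(x) = (1/r(x))·∫_{−r(x)}⁰ r(s) ds for x ≠ 0, B(0) = 0. Then A is twice differentiable at 0 with A'(0) = a + 1/2 and A''(0) = 2b·(1 + 1/(6a)), and B is differentiable at 0 with B'(0) = −a²/2. -/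
/-!
Let `F` be an explicit primitive of `r` near `0` (it involves `log (b x - a)`) and let
`G = dslope F 0`, so that `x G(x) = ∫₀ˣ r`. Since `F` is analytic at `0`, so is `G`, and
comparing Taylor coefficients gives `(n + 1) G⁽ⁿ⁾(0) = r⁽ⁿ⁾(0)`. Near `0` the singular factor
`1/r(x)` cancels: `A(x) = x + r(x) - G(x)/a + (b/a²)(F(x) - F(0))` and `B(x) = G(-r(x))`, both
smooth at `0`, and their derivatives follow from `r(0) = 0`, `r'(0) = a`, `r''(0) = 2b`.
-/

open Real Set

open Filter Topology
open scoped Nat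

section Dslope

variable {𝕜 E : Type*} [NontriviallyNormedField 𝕜] [NormedAddCommGroup E] [NormedSpace 𝕜 E]
  {f : 𝕜 → E} {c : 𝕜}

theorem AnalyticAt.dslope (hf : AnalyticAt 𝕜 f c) : AnalyticAt 𝕜 (_root_.dslope f c) c :=
  let ⟨p, hp⟩ := hf
  ⟨p.fslope, hp.has_fpower_series_dslope_fslope⟩

variable [CompleteSpace E]

theorem HasFPowerSeriesAt.iteratedDeriv_eq_factorial_smul_coeff
    {p : FormalMultilinearSeries 𝕜 𝕜 E} (hf : HasFPowerSeriesAt f p c) (n : ℕ) :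
    iteratedDeriv n f c = n ! • p.coeff n := by
  obtain ⟨r, hr⟩ := hf
  rw [iteratedDeriv_eq_iteratedFDeriv, ← hr.factorial_smul, FormalMultilinearSeries.coeff]
  simp

/-- Both sides are `(n + 1)!` times the `(n + 1)`-st Taylor coefficient of `f` at `c`. -/
theorem AnalyticAt.iteratedDeriv_succ_eq_smul_iteratedDeriv_dslope (hf : AnalyticAt 𝕜 f c)
    (n : ℕ) : iteratedDeriv (n + 1) f c = (n + 1) • iteratedDeriv n (_root_.dslope f c) c := by
  obtain ⟨p, hp⟩ := hf
  rw [hp.iteratedDeriv_eq_factorial_smul_coeff,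
    hp.has_fpower_series_dslope_fslope.iteratedDeriv_eq_factorial_smul_coeff,
    FormalMultilinearSeries.coeff_fslope, smul_smul, Nat.factorial_succ]

end Dslope

section

variable {a b : ℝ}

theorem rfun_zero (a b : ℝ) : rfun a b 0 = 0 := by
  simp [rfun]

theorem analyticAt_rfun {x : ℝ} (hx : a - b * x ≠ 0) : AnalyticAt ℝ (rfun a b) x := by
  change AnalyticAt ℝ (fun x => a ^ 2 * x / (a - b * x)) x
  fun_prop (disch := exact hx)

theorem hasDerivAt_rfun {x : ℝ} (hx : a - b * x ≠ 0) :
    HasDerivAt (rfun a b) (a ^ 3 / (a - b * x) ^ 2) x := by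
  refine (((hasDerivAt_id' x).const_mul (a ^ 2)).fun_div
    (((hasDerivAt_id' x).const_mul b).const_sub a) hx).congr_deriv ?_
  field_simp
  ring

theorem deriv_rfun_zero (ha : a ≠ 0) : deriv (rfun a b) 0 = a := by
  rw [(hasDerivAt_rfun (by simpa using ha)).deriv, mul_zero, sub_zero]
  field_simp

theorem deriv_deriv_rfun_zero (ha : a ≠ 0) : deriv (deriv (rfun a b)) 0 = 2 * b := by
  have hne : ∀ᶠ x in 𝓝 (0 : ℝ), a - b * x ≠ 0 :=
    (by fun_prop : Continuous fun x : ℝ => a - b * x).continuousAt.eventually_ne (by simpa)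
  have hderiv : deriv (rfun a b) =ᶠ[𝓝 0] fun x => a ^ 3 / (a - b * x) ^ 2 :=
    hne.mono fun x hx => (hasDerivAt_rfun hx).deriv
  have h := (hasDerivAt_const (0 : ℝ) (a ^ 3)).fun_div
    ((((hasDerivAt_id' (0 : ℝ)).const_mul b).const_sub a).fun_pow 2) (by simpa using ha)
  rw [hderiv.deriv_eq, h.deriv]
  simp only [mul_zero, sub_zero]
  field_simp
  ring

noncomputable def rfunPrimitive (a b x : ℝ) : ℝ :=
  -(a ^ 2 * x / b) - a ^ 3 / b ^ 2 * Real.log (b * x - a)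

theorem hasDerivAt_rfunPrimitive (hb : b ≠ 0) {x : ℝ} (hx : b * x - a ≠ 0) :
    HasDerivAt (rfunPrimitive a b) (rfun a b x) x := by
  have hx' : a - b * x ≠ 0 := fun h => hx (by linarith)
  have hlog := (((hasDerivAt_id' x).const_mul b).sub_const a).log hx
  refine ((((hasDerivAt_id' x).const_mul (a ^ 2)).div_const b).neg.sub
    (hlog.const_mul (a ^ 3 / b ^ 2))).congr_deriv ?_
  unfold rfun
  field_simp
  ring

theorem analyticAt_rfunPrimitive (ha : a < 0) : AnalyticAt ℝ (rfunPrimitive a b) 0 := by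
  change AnalyticAt ℝ (fun x => -(a ^ 2 * x / b) - a ^ 3 / b ^ 2 * Real.log (b * x - a)) 0
  have hlog : AnalyticAt ℝ (fun x => Real.log (b * x - a)) 0 :=
    AnalyticAt.log (by fun_prop) (by simpa using ha)
  fun_prop

theorem eventually_mul_sub_pos (b : ℝ) (ha : a < 0) : ∀ᶠ x in 𝓝 (0 : ℝ), 0 < b * x - a :=
  continuousAt_const.eventually_lt (by fun_prop) (by linarith)

theorem deriv_rfunPrimitive_eventuallyEq (ha : a < 0) (hb : b ≠ 0) :
    deriv (rfunPrimitive a b) =ᶠ[𝓝 0] rfun a b :=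
  (eventually_mul_sub_pos b ha).mono fun _ hx => (hasDerivAt_rfunPrimitive hb hx.ne').deriv

theorem integral_rfun_s15 (ha : a < 0) (hb : b ≠ 0) {x : ℝ} (hx : 0 < b * x - a) :
    ∫ t in 0..x, rfun a b t = rfunPrimitive a b x - rfunPrimitive a b 0 := by
  have hpos : ∀ t ∈ uIcc 0 x, 0 < b * t - a := by
    intro t ht
    rcases mem_uIcc.1 ht with ⟨h₁, h₂⟩ | ⟨h₁, h₂⟩ <;> rcases le_total 0 b with h | h <;>
      nlinarith
  apply intervalIntegral.integral_eq_sub_of_hasDerivAt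
  · exact fun t ht => hasDerivAt_rfunPrimitive hb (hpos t ht).ne'
  · exact ContinuousOn.intervalIntegrable fun t ht =>
      (analyticAt_rfun (by linarith [hpos t ht])).continuousAt.continuousWithinAt

noncomputable def rfunAverage (a b : ℝ) : ℝ → ℝ :=
  dslope (rfunPrimitive a b) 0

theorem mul_rfunAverage (a b x : ℝ) :
    x * rfunAverage a b x = rfunPrimitive a b x - rfunPrimitive a b 0 := by
  simpa [rfunAverage] using sub_smul_dslope (rfunPrimitive a b) 0 x

theorem analyticAt_rfunAverage (ha : a < 0) : AnalyticAt ℝ (rfunAverage a b) 0 :=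
  (analyticAt_rfunPrimitive ha).dslope

theorem iteratedDeriv_rfunAverage_zero (ha : a < 0) (hb : b ≠ 0) (n : ℕ) :
    (n + 1) * iteratedDeriv n (rfunAverage a b) 0 = iteratedDeriv n (rfun a b) 0 := by
  rw [← (deriv_rfunPrimitive_eventuallyEq ha hb).iteratedDeriv_eq, ← iteratedDeriv_succ',
    (analyticAt_rfunPrimitive ha).iteratedDeriv_succ_eq_smul_iteratedDeriv_dslope, nsmul_eq_mul]
  push_cast
  rfl

theorem rfunAverage_zero (ha : a < 0) (hb : b ≠ 0) : rfunAverage a b 0 = 0 := by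
  simpa [rfun_zero] using iteratedDeriv_rfunAverage_zero ha hb 0

theorem deriv_rfunAverage_zero (ha : a < 0) (hb : b ≠ 0) : deriv (rfunAverage a b) 0 = a / 2 := by
  have h := iteratedDeriv_rfunAverage_zero ha hb 1
  rw [iteratedDeriv_one, iteratedDeriv_one, deriv_rfun_zero ha.ne] at h
  norm_num at h
  linarith

theorem deriv_deriv_rfunAverage_zero (ha : a < 0) (hb : b ≠ 0) :
    deriv (deriv (rfunAverage a b)) 0 = 2 * b / 3 := by
  have h := iteratedDeriv_rfunAverage_zero ha hb 2
  rw [iteratedDeriv_succ, iteratedDeriv_one, iteratedDeriv_succ, iteratedDeriv_one,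
    deriv_deriv_rfun_zero ha.ne] at h
  norm_num at h
  linarith

theorem Afun_eventuallyEq (ha : a < 0) (hb : b ≠ 0) :
    Afun a b =ᶠ[𝓝 0] fun x => x + rfun a b x - rfunAverage a b x / a +
      b / a ^ 2 * (rfunPrimitive a b x - rfunPrimitive a b 0) := by
  filter_upwards [eventually_mul_sub_pos b ha] with x hx
  rcases eq_or_ne x 0 with rfl | hx0
  · simp [Afun, rfun_zero, rfunAverage_zero ha hb]
  · have ha0 : a ≠ 0 := ha.ne
    have hden : a - b * x ≠ 0 := (by linarith : a - b * x < 0).ne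
    rw [Afun, if_neg hx0, intervalIntegral.integral_symm, integral_rfun_s15 ha hb hx,
      ← mul_rfunAverage]
    unfold rfun
    field_simp
    ring

theorem Bfun_eventuallyEq (ha : a < 0) (hb : b ≠ 0) :
    Bfun a b =ᶠ[𝓝 0] fun x => rfunAverage a b (-rfun a b x) := by
  have hr : ContinuousAt (rfun a b) 0 := (analyticAt_rfun (by simpa using ha.ne)).continuousAt
  have hdom : ∀ᶠ x in 𝓝 (0 : ℝ), 0 < b * -rfun a b x - a :=
    continuousAt_const.eventually_lt (by fun_prop) (by simp [rfun_zero]; linarith)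
  filter_upwards [eventually_mul_sub_pos b ha, hdom] with x hx hrx
  rcases eq_or_ne x 0 with rfl | hx0
  · simp [Bfun, rfun_zero, rfunAverage_zero ha hb]
  · have hrx0 : rfun a b x ≠ 0 :=
      div_ne_zero (mul_ne_zero (pow_ne_zero 2 ha.ne) hx0) (by linarith : a - b * x < 0).ne
    rw [Bfun, if_neg hx0, intervalIntegral.integral_symm, integral_rfun_s15 ha hb hrx,
      ← mul_rfunAverage]
    field_simp

theorem eventually_hasDerivAt_Afun (ha : a < 0) (hb : b ≠ 0) :
    ∀ᶠ x in 𝓝 0, HasDerivAt (Afun a b)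
      (1 + deriv (rfun a b) x - deriv (rfunAverage a b) x / a + b / a ^ 2 * rfun a b x) x := by
  filter_upwards [(Afun_eventuallyEq ha hb).eventuallyEq_nhds, eventually_mul_sub_pos b ha,
    (analyticAt_rfunAverage ha).eventually_analyticAt] with x hA hx hG
  have hr := (analyticAt_rfun (by linarith : a - b * x < 0).ne).differentiableAt.hasDerivAt
  exact ((((hasDerivAt_id' x).add hr).sub (hG.differentiableAt.hasDerivAt.div_const a)).add
    (((hasDerivAt_rfunPrimitive hb hx.ne').sub_const _).const_mul _)).congr_of_eventuallyEq hA

theorem hasDerivAt_Afun_zero (ha : a < 0) (hb : b ≠ 0) :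
    HasDerivAt (Afun a b) (a + 1 / 2) 0 := by
  have ha0 : a ≠ 0 := ha.ne
  refine (eventually_hasDerivAt_Afun ha hb).self_of_nhds.congr_deriv ?_
  rw [deriv_rfun_zero ha0, deriv_rfunAverage_zero ha hb, rfun_zero]
  field_simp
  ring

theorem hasDerivAt_deriv_Afun_zero (ha : a < 0) (hb : b ≠ 0) :
    HasDerivAt (deriv (Afun a b)) (2 * b * (1 + 1 / (6 * a))) 0 := by
  have ha0 : a ≠ 0 := ha.ne
  have hr : AnalyticAt ℝ (rfun a b) 0 := analyticAt_rfun (by simpa using ha0)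
  have hG : AnalyticAt ℝ (rfunAverage a b) 0 := analyticAt_rfunAverage ha
  have h := (((hasDerivAt_const (0 : ℝ) (1 : ℝ)).add hr.deriv.differentiableAt.hasDerivAt).sub
    (hG.deriv.differentiableAt.hasDerivAt.div_const a)).add
    (hr.differentiableAt.hasDerivAt.const_mul (b / a ^ 2))
  have hderiv := (eventually_hasDerivAt_Afun ha hb).mono fun _ hx => hx.deriv
  refine (h.congr_of_eventuallyEq hderiv).congr_deriv ?_
  rw [deriv_deriv_rfun_zero ha0, deriv_deriv_rfunAverage_zero ha hb, deriv_rfun_zero ha0]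
  field_simp
  ring

theorem hasDerivAt_Bfun_zero (ha : a < 0) (hb : b ≠ 0) :
    HasDerivAt (Bfun a b) (-a ^ 2 / 2) 0 := by
  have hr : HasDerivAt (fun x => -rfun a b x) (-a) 0 := by
    have h := (analyticAt_rfun (a := a) (b := b) (x := 0) (by simpa using ha.ne)).differentiableAt
    simpa only [deriv_rfun_zero ha.ne] using h.hasDerivAt.fun_neg
  have hG : HasDerivAt (rfunAverage a b) (a / 2) (-rfun a b 0) := by
    simpa [rfun_zero, deriv_rfunAverage_zero ha hb] using
      (analyticAt_rfunAverage ha (b := b)).differentiableAt.hasDerivAt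
  refine ((hG.comp 0 hr).congr_of_eventuallyEq (Bfun_eventuallyEq ha hb)).congr_deriv ?_
  ring

end

/-- Derivatives at 0 of the auxiliary functions: `A'(0) = a + 1/2`,
`A''(0) = 2b(1 + 1/(6a))` and `B'(0) = -a²/2`. -/
theorem Afun_Bfun_derivatives_at_zero
    (a b : ℝ) (ha : a < 0) (hb : 0 < b) :
    (DifferentiableAt ℝ (Afun a b) 0 ∧ deriv (Afun a b) 0 = a + 1 / 2) ∧
    (DifferentiableAt ℝ (deriv (Afun a b)) 0 ∧
      deriv (deriv (Afun a b)) 0 = 2 * b * (1 + 1 / (6 * a))) ∧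
    (DifferentiableAt ℝ (Bfun a b) 0 ∧ deriv (Bfun a b) 0 = -a ^ 2 / 2) := by
  have hA := hasDerivAt_Afun_zero ha hb.ne'
  have hA' := hasDerivAt_deriv_Afun_zero ha hb.ne'
  have hB := hasDerivAt_Bfun_zero ha hb.ne'
  exact ⟨⟨hA.differentiableAt, hA.deriv⟩, ⟨hA'.differentiableAt, hA'.deriv⟩,
    ⟨hB.differentiableAt, hB.deriv⟩⟩
end
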